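/- Define an equivalence relation ∼ on monomials of K⟨x,y,z⟩ by cyclic permutation (u ∼ v iff u = w₁w₂ and v = w₂w₁), extended linearly to K⟨x,y,z⟩. Then for f₄' = α₁[x,y][x,z] + β₁[x,z][x,y], g₄' = α₂[x,y][y,z] + β₂[y,z][x,y], h₄' = α₃[x,z][y,z] + β₃[y,z][x,z], the sum of right Fox derivatives ∂_r f₄'/∂_r x + ∂_r g₄'/∂_r y + ∂_r h₄'/∂_r z is equivalent (under ∼) to (−α₁+β₁−α₂+β₂−α₃+β₃)(xyz − xzy). -/

import Mathlib

/-!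
The right Fox derivative `∂ᵢ` is a well-defined linear map on the free algebra, so the hypotheses
determine `fx`, `gy`, `hz`.
Expanding, these are combinations of the six cubic monomials in distinct letters, and modulo cyclic
rotation each of them is `xyz` or `xzy`.
-/

open FreeAlgebra

noncomputable section

variable (K : Type*) [Field K]

local notation "x" => FreeAlgebra.ι K (0 : Fin 3)
local notation "y" => FreeAlgebra.ι K (1 : Fin 3)
local notation "z" => FreeAlgebra.ι K (2 : Fin 3)

/-- The monomial of K⟨x,y,z⟩ corresponding to a word in the free letters. -/
def mono (l : List (Fin 3)) : FreeAlgebra K (Fin 3) :=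
  (l.map (FreeAlgebra.ι K)).prod

/-- The K-span of all differences of cyclically equivalent monomials. -/
def cycSpan : Submodule K (FreeAlgebra K (Fin 3)) :=
  Submodule.span K
    {p | ∃ u v : List (Fin 3), p = mono K (u ++ v) - mono K (v ++ u)}

/-- Cyclic equivalence: two elements are equivalent iff their difference lies
in the span of differences of cyclically equivalent monomials. -/
def CyclicEquiv (f g : FreeAlgebra K (Fin 3)) : Prop := f - g ∈ cycSpan K

/-- `g` is the right Fox derivative of `f` with respect to the `i`-th variable. -/
def IsRightFoxDeriv (f : FreeAlgebra K (Fin 3)) (i : Fin 3)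
    (g : FreeAlgebra K (Fin 3)) : Prop :=
  ∃ (c : Fin 3 → FreeAlgebra K (Fin 3)) (α : K),
    f = (∑ j : Fin 3, FreeAlgebra.ι K j * c j) + algebraMap K (FreeAlgebra K (Fin 3)) α ∧
    c i = g

section RightFoxDerivative

variable {R X : Type*} [CommSemiring R] [DecidableEq X]

open Matrix

/-- Under `a ↦ !![ε a, ∂ᵢ a; 0, a]` (with `ε` the augmentation) the product rule
`∂ᵢ (a * b) = ∂ᵢ a * b + ε a • ∂ᵢ b` of the right Fox derivative becomes matrix multiplication,
so `∂ᵢ` is the upper-right entry of an algebra homomorphism. -/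
def foxMatrix (i : X) : FreeAlgebra R X →ₐ[R] Matrix (Fin 2) (Fin 2) (FreeAlgebra R X) :=
  FreeAlgebra.lift R fun j => !![0, if j = i then 1 else 0; 0, FreeAlgebra.ι R j]

def rightFoxDeriv (i : X) : FreeAlgebra R X →ₗ[R] FreeAlgebra R X :=
  entryLinearMap R _ 0 1 ∘ₗ (foxMatrix i).toLinearMap

lemma foxMatrix_apply_one (i : X) (a : FreeAlgebra R X) :
    foxMatrix i a 1 0 = 0 ∧ foxMatrix i a 1 1 = a := by
  induction a with
  | grade0 r => simp [foxMatrix, Algebra.algebraMap_eq_smul_one]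
  | grade1 j => simp [foxMatrix]
  | mul a b ha hb => simp [mul_apply, Fin.sum_univ_two, ha, hb]
  | add a b ha hb => simp [ha, hb]

lemma rightFoxDeriv_algebraMap (i : X) (r : R) :
    rightFoxDeriv i (algebraMap R (FreeAlgebra R X) r) = 0 := by
  simp [rightFoxDeriv, algebraMap_matrix_apply]

lemma rightFoxDeriv_ι_mul (i j : X) (a : FreeAlgebra R X) :
    rightFoxDeriv i (FreeAlgebra.ι R j * a) = if j = i then a else 0 := by
  simp only [rightFoxDeriv, LinearMap.coe_comp, Function.comp_apply, AlgHom.toLinearMap_apply,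
    entryLinearMap_apply, map_mul, mul_apply, Fin.sum_univ_two, (foxMatrix_apply_one i a).2]
  simp [foxMatrix]

lemma rightFoxDeriv_sum_ι_mul_add_algebraMap [Fintype X] (i : X)
    (c : X → FreeAlgebra R X) (r : R) :
    rightFoxDeriv i ((∑ j, FreeAlgebra.ι R j * c j) + algebraMap R _ r) = c i := by
  simp [map_sum, rightFoxDeriv_ι_mul, rightFoxDeriv_algebraMap]

end RightFoxDerivative

lemma IsRightFoxDeriv.eq_rightFoxDeriv {f g : FreeAlgebra K (Fin 3)} {i : Fin 3}
    (h : IsRightFoxDeriv K f i g) : g = rightFoxDeriv i f := by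
  obtain ⟨c, r, rfl, rfl⟩ := h
  exact (rightFoxDeriv_sum_ι_mul_add_algebraMap i c r).symm

lemma cyclicEquiv_iff_mk_eq (f g : FreeAlgebra K (Fin 3)) :
    CyclicEquiv K f g ↔
      (Submodule.Quotient.mk f : _ ⧸ cycSpan K) = Submodule.Quotient.mk g :=
  (Submodule.Quotient.eq _).symm

lemma mk_ι_mul_ι_mul_ι_rotate (a b c : Fin 3) :
    (Submodule.Quotient.mk (ι K a * (ι K b * ι K c)) : _ ⧸ cycSpan K) =
      Submodule.Quotient.mk (ι K b * (ι K c * ι K a)) := by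
  rw [Submodule.Quotient.eq]
  exact Submodule.subset_span ⟨[a], [b, c], by simp [mono]⟩

theorem stmt_11 (α₁ β₁ α₂ β₂ α₃ β₃ : K)
    (fx gy hz : FreeAlgebra K (Fin 3))
    (hf : IsRightFoxDeriv K
      (α₁ • ((x * y - y * x) * (x * z - z * x)) +
        β₁ • ((x * z - z * x) * (x * y - y * x))) 0 fx)
    (hg : IsRightFoxDeriv K
      (α₂ • ((x * y - y * x) * (y * z - z * y)) +
        β₂ • ((y * z - z * y) * (x * y - y * x))) 1 gy)
    (hh : IsRightFoxDeriv K
      (α₃ • ((x * z - z * x) * (y * z - z * y)) +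
        β₃ • ((y * z - z * y) * (x * z - z * x))) 2 hz) :
    CyclicEquiv K (fx + gy + hz)
      ((-α₁ + β₁ - α₂ + β₂ - α₃ + β₃) • (x * y * z - x * z * y)) := by
  rw [hf.eq_rightFoxDeriv, hg.eq_rightFoxDeriv, hh.eq_rightFoxDeriv, cyclicEquiv_iff_mk_eq]
  simp only [mul_sub, sub_mul, mul_assoc, map_add, map_smul, map_sub, rightFoxDeriv_ι_mul,
    Fin.reduceEq, ↓reduceIte, sub_zero, zero_sub, Submodule.Quotient.mk_add,
    Submodule.Quotient.mk_smul, Submodule.Quotient.mk_sub, Submodule.Quotient.mk_neg]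
  rw [mk_ι_mul_ι_mul_ι_rotate K 1 0 2, mk_ι_mul_ι_mul_ι_rotate K 2 0 1,
    ← mk_ι_mul_ι_mul_ι_rotate K 0 1 2, ← mk_ι_mul_ι_mul_ι_rotate K 0 2 1]
  module

end
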